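/- arXiv:0806.3682 — 2 statements merged into one kernel-verified Lean document; each statement's English description precedes it below -/
import Mathlib

section
/- For colored permutations (σ',u') of size k and (σ'',u'') of size m, the product of the corresponding dual free colored quasi-ribbons in the free associative algebra satisfies G_{σ',u'} · G_{σ'',u''} = Σ_{σ ∈ σ'∗σ''} G_{σ, u'·u''}, where u'·u'' denotes the concatenation of the color words and σ'∗σ'' is the convolution of σ' and σ''. Consequently, the dual free colored quasi-ribbons span a ℤ-subalgebra FQSym^(ℓ) of the free associative algebra ℤ⟨𝐀⟩. -/
open scoped BigOperators

/-- Noncommutative formal series over the colored alphabet `ℕ × Fin ℓ`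
(more generally over `α × Fin ℓ`), as coefficient functions on words. -/
abbrev Series (α : Type) (ℓ : ℕ) : Type := List (α × Fin ℓ) → ℤ

/-- Product of noncommutative series: the coefficient of a word `w` in `F * G`
is the sum over all factorizations `w = w₁ · w₂` of `F w₁ * G w₂`. -/
def ncMul {α : Type} {ℓ : ℕ} (F G : Series α ℓ) : Series α ℓ :=
  fun w => ∑ k ∈ Finset.range (w.length + 1), F (w.take k) * G (w.drop k)

/-- Standardization of a word over a totally ordered alphabet, as the list of
(0-based) ranks: position `i` receives the number of positions `j` with a
strictly smaller letter, or an equal letter strictly to the left. -/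
def stdList {α : Type} [LinearOrder α] (v : List α) : List ℕ :=
  v.mapIdx fun i a =>
    ((List.range v.length).filter fun j =>
      v.getD j a < a ∨ (v.getD j a = a ∧ j < i)).length

/-- The word (0-based) of a permutation of `Fin n`. -/
def permList {n : ℕ} (σ : Equiv.Perm (Fin n)) : List ℕ :=
  (List.finRange n).map fun i => (σ i : ℕ)

/-- The word of colors of a coloring `u : Fin n → Fin ℓ`. -/
def colorList {n ℓ : ℕ} (u : Fin n → Fin ℓ) : List (Fin ℓ) :=
  (List.finRange n).map u

/-- The dual free colored quasi-ribbon `G_{σ,u}`: the (formal) sum of all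
colored words `w` of length `n` whose colored standardization is `(σ, u)`. -/
def Gfun {α : Type} [LinearOrder α] {ℓ n : ℕ} (σ : Equiv.Perm (Fin n))
    (u : Fin n → Fin ℓ) : Series α ℓ :=
  fun w =>
    if stdList (w.map Prod.fst) = permList σ ∧ w.map Prod.snd = colorList u
    then 1 else 0

/-!
In the coefficient of a coloured word `w = (v, c)` in `G_{σ',u'} · G_{σ'',u''}` only the
factorization `w = w₁ w₂` with `|w₁| = k` survives, by homogeneity, and it is `1` exactly when
`c = u' u''`, `Std(v₁) = σ'` and `Std(v₂) = σ''`. On the right-hand side only `σ = Std(v)` can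
contribute. `Std(v)` lists the ranks of the positions of `v` for the lexicographic order on
(letter, position); restricting to a set of positions preserves that order, so standardization
commutes with taking subwords: `Std(Std(v)|_I) = Std(v|_I)`. Hence `Std(v) ∈ σ' ∗ σ''` iff
`Std(v₁) = σ'` and `Std(v₂) = σ''`. The span is closed under the product because the product
is bilinear.
-/

open Finset

section Rank

variable {ι β γ : Type*} [Fintype ι] [LinearOrder β] [LinearOrder γ]

def rank (g : ι → β) (i : ι) : ℕ :=
  #{j | g j < g i}

theorem rank_lt_rank_iff (g : ι → β) {i j : ι} : rank g j < rank g i ↔ g j < g i := by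
  constructor
  · intro h
    by_contra hij
    refine (card_le_card fun x => ?_).not_gt h
    simp only [mem_filter, mem_univ, true_and]
    exact fun hx => hx.trans_le (not_lt.mp hij)
  · intro h
    refine card_lt_card ((ssubset_iff_of_subset fun x => ?_).mpr ⟨j, by simpa using h, by simp⟩)
    simp only [mem_filter, mem_univ, true_and]
    exact fun hx => hx.trans h

theorem rank_injective {g : ι → β} (hg : Function.Injective g) : Function.Injective (rank g) :=
  fun _ _ hij => hg <| le_antisymm
    (not_lt.mp fun h => hij.not_gt ((rank_lt_rank_iff g).mpr h))
    (not_lt.mp fun h => hij.not_lt ((rank_lt_rank_iff g).mpr h))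

theorem rank_lt_card (g : ι → β) (i : ι) : rank g i < Fintype.card ι :=
  card_lt_card (filter_ssubset.mpr ⟨i, mem_univ i, lt_irrefl _⟩)

theorem rank_congr {g : ι → β} {h : ι → γ} (hgh : ∀ i j, g j < g i ↔ h j < h i) :
    rank g = rank h := by
  funext i
  simp only [rank, hgh]

end Rank

section LexKey

variable {α : Type*} {n k : ℕ}

def lexKey (f : Fin n → α) (i : Fin n) : α ×ₗ Fin n := toLex (f i, i)

theorem lexKey_injective (f : Fin n → α) : Function.Injective (lexKey f) :=
  fun _ _ h => congrArg Prod.snd (toLex.injective h)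

variable [LinearOrder α]

theorem lexKey_lt_lexKey_iff_of_injective {f : Fin n → α} (hf : Function.Injective f)
    {i j : Fin n} : lexKey f j < lexKey f i ↔ f j < f i := by
  simp only [lexKey, Prod.Lex.toLex_lt_toLex]
  exact ⟨fun h => h.elim id fun h' => absurd (hf h'.1 ▸ h'.2) (lt_irrefl i), Or.inl⟩

theorem lexKey_comp_lt_lexKey_comp_iff (f : Fin n → α) {e : Fin k → Fin n} (he : StrictMono e)
    {i j : Fin k} : lexKey (f ∘ e) j < lexKey (f ∘ e) i ↔ lexKey f (e j) < lexKey f (e i) := by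
  simp only [lexKey, Prod.Lex.toLex_lt_toLex, Function.comp, he.lt_iff_lt]

end LexKey

theorem length_filter_range_eq_card {n : ℕ} (p : ℕ → Prop) [DecidablePred p] :
    ((List.range n).filter p).length = #{i : Fin n | p i} := by
  rw [← List.map_coe_finRange_eq_range, List.filter_map, List.length_map]
  rfl

section Standardization

variable {α : Type} [LinearOrder α] {n k m : ℕ}

theorem stdList_ofFn (f : Fin n → α) :
    stdList (List.ofFn f) = List.ofFn (rank (lexKey f)) := by
  refine List.ext_getElem (by simp [stdList]) fun i _ _ => ?_
  simp only [stdList, List.getElem_mapIdx, List.getElem_ofFn, List.length_ofFn,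
    length_filter_range_eq_card, rank]
  congr 1
  ext j
  simp [lexKey, Prod.Lex.toLex_lt_toLex, Fin.lt_def]

theorem stdList_ofFn_rank_comp (f : Fin n → α) {e : Fin k → Fin n} (he : StrictMono e) :
    stdList (List.ofFn (rank (lexKey f) ∘ e)) = stdList (List.ofFn (f ∘ e)) := by
  rw [stdList_ofFn, stdList_ofFn]
  refine congrArg List.ofFn (rank_congr fun i j => ?_)
  rw [lexKey_lt_lexKey_iff_of_injective ((rank_injective (lexKey_injective f)).comp he.injective),
    lexKey_comp_lt_lexKey_comp_iff f he]
  exact rank_lt_rank_iff _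

theorem stdList_take_stdList (f : Fin (k + m) → α) :
    stdList ((stdList (List.ofFn f)).take k) = stdList ((List.ofFn f).take k) := by
  rw [stdList_ofFn, List.ofFn_add, List.ofFn_add, List.take_left' (by simp),
    List.take_left' (by simp)]
  exact stdList_ofFn_rank_comp f (Fin.strictMono_castLE _)

theorem stdList_drop_stdList (f : Fin (k + m) → α) :
    stdList ((stdList (List.ofFn f)).drop k) = stdList ((List.ofFn f).drop k) := by
  rw [stdList_ofFn, List.ofFn_add, List.ofFn_add, List.drop_left' (by simp),
    List.drop_left' (by simp)]
  exact stdList_ofFn_rank_comp f (Fin.strictMono_natAdd _)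

theorem permList_eq_ofFn (σ : Equiv.Perm (Fin n)) : permList σ = List.ofFn fun i => (σ i : ℕ) :=
  List.ofFn_eq_map.symm

theorem permList_injective : Function.Injective (permList (n := n)) := by
  intro σ τ h
  rw [permList_eq_ofFn, permList_eq_ofFn, List.ofFn_inj] at h
  exact Equiv.ext fun i => Fin.ext (congrFun h i)

theorem exists_permList_eq_stdList (f : Fin n → α) :
    ∃ τ : Equiv.Perm (Fin n), permList τ = stdList (List.ofFn f) := by
  let g : Fin n → Fin n := fun i => ⟨rank (lexKey f) i, by simpa using rank_lt_card (lexKey f) i⟩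
  have hg : Function.Injective g := fun i j h =>
    rank_injective (lexKey_injective f) (congrArg Fin.val h)
  exact ⟨Equiv.ofBijective g (Finite.injective_iff_bijective.mp hg), by
    rw [permList_eq_ofFn, stdList_ofFn]; rfl⟩

end Standardization

theorem colorList_append {k m ℓ : ℕ} (u' : Fin k → Fin ℓ) (u'' : Fin m → Fin ℓ) :
    colorList (Fin.append u' u'') = colorList u' ++ colorList u'' := by
  simp only [colorList, ← List.ofFn_eq_map, List.ofFn_fin_append]

section Series

variable {α : Type} {ℓ : ℕ}

def IsHomogeneous (F : Series α ℓ) (n : ℕ) : Prop :=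
  ∀ w : List (α × Fin ℓ), w.length ≠ n → F w = 0

theorem ncMul_apply_of_isHomogeneous {F : Series α ℓ} {k : ℕ} (hF : IsHomogeneous F k)
    (G : Series α ℓ) (w : List (α × Fin ℓ)) : ncMul F G w = F (w.take k) * G (w.drop k) := by
  refine sum_eq_single k (fun j hj hjk => ?_) fun hk => ?_
  · rw [hF _ (by simp at hj ⊢; omega), zero_mul]
  · rw [hF _ (by simp at hk ⊢; omega), zero_mul]

theorem IsHomogeneous.ncMul {F G : Series α ℓ} {k m : ℕ} (hF : IsHomogeneous F k)
    (hG : IsHomogeneous G m) : IsHomogeneous (ncMul F G) (k + m) := by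
  intro w hw
  rw [ncMul_apply_of_isHomogeneous hF]
  by_cases hk : (w.take k).length = k
  · rw [hG _ (by simp at hk ⊢; omega), mul_zero]
  · rw [hF _ hk, zero_mul]

theorem IsHomogeneous.sum {ι : Type*} {s : Finset ι} {F : ι → Series α ℓ} {n : ℕ}
    (hF : ∀ i ∈ s, IsHomogeneous (F i) n) : IsHomogeneous (∑ i ∈ s, F i) n := fun w hw => by
  rw [Finset.sum_apply]
  exact sum_eq_zero fun i hi => hF i hi w hw

theorem isHomogeneous_Gfun [LinearOrder α] {n : ℕ} (σ : Equiv.Perm (Fin n)) (u : Fin n → Fin ℓ) :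
    IsHomogeneous (Gfun (α := α) σ u) n := fun w hw =>
  if_neg fun h => hw (by simpa [colorList] using congrArg List.length h.2)

variable (α ℓ) in
def ncMulₗ : Series α ℓ →ₗ[ℤ] Series α ℓ →ₗ[ℤ] Series α ℓ :=
  LinearMap.mk₂ ℤ ncMul
    (fun _ _ _ => funext fun _ => by simp [ncMul, add_mul, sum_add_distrib])
    (fun _ _ _ => funext fun _ => by simp [ncMul, mul_sum, mul_assoc])
    (fun _ _ _ => funext fun _ => by simp [ncMul, mul_add, sum_add_distrib])
    (fun _ _ _ => funext fun _ => by simp [ncMul, mul_sum, mul_left_comm])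

end Series

theorem LinearMap.apply_mem_span_of_forall_mem {R M : Type*} [CommSemiring R] [AddCommMonoid M]
    [Module R M] (f : M →ₗ[R] M →ₗ[R] M) {s : Set M}
    (hs : ∀ a ∈ s, ∀ b ∈ s, f a b ∈ Submodule.span R s) {x y : M}
    (hx : x ∈ Submodule.span R s) (hy : y ∈ Submodule.span R s) :
    f x y ∈ Submodule.span R s := by
  have hxy := Submodule.apply_mem_map₂ f hx hy
  rw [Submodule.map₂_span_span] at hxy
  exact Submodule.span_le.mpr (Set.image2_subset_iff.mpr hs) hxy

theorem List.eq_append_iff_take_drop {β : Type*} {l l₁ l₂ : List β} {k : ℕ} (h : l₁.length = k) :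
    l = l₁ ++ l₂ ↔ l.take k = l₁ ∧ l.drop k = l₂ := by
  constructor
  · rintro rfl
    exact ⟨List.take_left' h, List.drop_left' h⟩
  · rintro ⟨rfl, rfl⟩
    exact (List.take_append_drop k l).symm

theorem ncMul_Gfun_Gfun {α : Type} [LinearOrder α] {ℓ k m : ℕ} (σ' : Equiv.Perm (Fin k))
    (u' : Fin k → Fin ℓ) (σ'' : Equiv.Perm (Fin m)) (u'' : Fin m → Fin ℓ) :
    ncMul (Gfun (α := α) σ' u') (Gfun σ'' u'') =
      ∑ σ ∈ Finset.univ.filter (fun σ : Equiv.Perm (Fin (k + m)) =>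
          stdList ((permList σ).take k) = permList σ' ∧
          stdList ((permList σ).drop k) = permList σ''),
        Gfun σ (Fin.append u' u'') := by
  set S := Finset.univ.filter (fun σ : Equiv.Perm (Fin (k + m)) =>
    stdList ((permList σ).take k) = permList σ' ∧ stdList ((permList σ).drop k) = permList σ'')
  have hL := (isHomogeneous_Gfun (α := α) σ' u').ncMul (isHomogeneous_Gfun σ'' u'')
  have hR : IsHomogeneous (∑ σ ∈ S, Gfun (α := α) σ (Fin.append u' u'')) (k + m) :=
    .sum fun σ _ => isHomogeneous_Gfun σ _
  funext w
  by_cases hw : w.length = k + m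
  swap
  · rw [hL w hw, hR w hw]
  obtain ⟨f, hf⟩ : ∃ f : Fin (k + m) → α, w.map Prod.fst = List.ofFn f :=
    ⟨fun i => (w.map Prod.fst)[i]'(by simp [hw]), by simp [List.ext_getElem_iff, hw]⟩
  obtain ⟨τ, hτ⟩ := exists_permList_eq_stdList f
  have hτS : τ ∈ S ↔ stdList ((w.take k).map Prod.fst) = permList σ' ∧
      stdList ((w.drop k).map Prod.fst) = permList σ'' := by
    simp only [S, mem_filter, mem_univ, true_and, hτ, List.map_take,
      List.map_drop, hf, stdList_take_stdList, stdList_drop_stdList]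
  have hcolor : w.map Prod.snd = colorList (Fin.append u' u'') ↔
      (w.take k).map Prod.snd = colorList u' ∧ (w.drop k).map Prod.snd = colorList u'' := by
    rw [colorList_append, List.eq_append_iff_take_drop (k := k) (by simp [colorList]), List.map_take,
      List.map_drop]
  have hG : ∀ σ, Gfun σ (Fin.append u' u'') w =
      if σ = τ then (if w.map Prod.snd = colorList (Fin.append u' u'') then 1 else 0) else 0 := by
    intro σ
    simp only [Gfun, hf, ← hτ, permList_injective.eq_iff, eq_comm (a := τ), ite_and]
  rw [ncMul_apply_of_isHomogeneous (isHomogeneous_Gfun σ' u'), Finset.sum_apply,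
    sum_congr rfl fun σ _ => hG σ, sum_ite_eq', ← ite_and]
  simp only [Gfun, ite_zero_mul_ite_zero, mul_one]
  exact if_congr (by rw [hτS, hcolor]; tauto) rfl rfl

/-- the product of two dual free colored quasi-ribbons is the sum
of the `G_{σ, u'·u''}` over the convolution `σ ∈ σ' ∗ σ''`; consequently the
`G_{σ,u}` span a `ℤ`-subalgebra `FQSym^(ℓ)` of `ℤ⟨𝐀⟩` (the span is closed under
the product). -/
theorem stmt_0 (ℓ k m : ℕ) (σ' : Equiv.Perm (Fin k)) (u' : Fin k → Fin ℓ)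
    (σ'' : Equiv.Perm (Fin m)) (u'' : Fin m → Fin ℓ) :
    (ncMul (Gfun (α := ℕ) σ' u') (Gfun σ'' u'') =
      ∑ σ ∈ Finset.univ.filter (fun σ : Equiv.Perm (Fin (k + m)) =>
          stdList ((permList σ).take k) = permList σ' ∧
          stdList ((permList σ).drop k) = permList σ''),
        Gfun σ (Fin.append u' u''))
    ∧ (∀ x y : Series ℕ ℓ,
        x ∈ Submodule.span ℤ {f : Series ℕ ℓ |
          ∃ (n : ℕ) (σ : Equiv.Perm (Fin n)) (u : Fin n → Fin ℓ), f = Gfun σ u} →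
        y ∈ Submodule.span ℤ {f : Series ℕ ℓ |
          ∃ (n : ℕ) (σ : Equiv.Perm (Fin n)) (u : Fin n → Fin ℓ), f = Gfun σ u} →
        ncMul x y ∈ Submodule.span ℤ {f : Series ℕ ℓ |
          ∃ (n : ℕ) (σ : Equiv.Perm (Fin n)) (u : Fin n → Fin ℓ), f = Gfun σ u}) := by
  refine ⟨ncMul_Gfun_Gfun σ' u' σ'' u'', fun x y hx hy => ?_⟩
  refine (ncMulₗ ℕ ℓ).apply_mem_span_of_forall_mem ?_ hx hy
  rintro _ ⟨_, _, _, rfl⟩ _ ⟨_, _, _, rfl⟩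
  change ncMul _ _ ∈ _
  rw [ncMul_Gfun_Gfun]
  exact Submodule.sum_mem _ fun σ _ => Submodule.subset_span ⟨_, σ, _, rfl⟩
end

section
/- Fix two colors 0 < 1. Call a pair (𝐚,u) of a parking function of size n and a binary color word of length n a level-2 parking function if: only matches of 𝐚 may carry color 1; for every letter of 𝐚 colored 1, all occurrences of the same value to its left also carry color 1; and every value occurring in 𝐚 has at least one occurrence of color 0. Then the span of the elements F_{(𝐚,u)} indexed by level-2 parking functions is a subalgebra of PQSym^(2), and the span of the elements G_{(𝐚,u)} indexed by level-2 parking functions is a subcoalgebra of PQSym^(2). -/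
open scoped BigOperators
open scoped Classical

def dval (w : List ℕ) : ℕ :=
  (((List.range (w.length + 2)).find? fun i =>
      decide (w.countP (fun a => decide (a ≤ i)) < i))).getD (w.length + 1)

def parkAux : ℕ → List ℕ → List ℕ
  | 0, w => w
  | fuel + 1, w =>
      if dval w = w.length + 1 then w
      else parkAux fuel (w.map fun a => if dval w < a then a - 1 else a)

def park (w : List ℕ) : List ℕ := parkAux (w.sum + 1) w

def IsPF (l : List ℕ) : Prop :=
  (∀ a ∈ l, 1 ≤ a ∧ a ≤ l.length) ∧
  ∀ b, 1 ≤ b → b ≤ l.length → b ≤ l.countP (fun a => decide (a ≤ b))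

def wordA {n : ℕ} (f : Fin n → Fin n) : List ℕ :=
  (List.finRange n).map fun i => (f i : ℕ) + 1

abbrev CPFsub (ℓ n : ℕ) := {p : (Fin n → Fin n) × (Fin n → Fin ℓ) // IsPF (wordA p.1)}

abbrev CPF (ℓ : ℕ) := Σ n : ℕ, CPFsub ℓ n

abbrev PQS (ℓ : ℕ) := CPF ℓ →₀ ℤ

abbrev PQS2 (ℓ : ℕ) := (CPF ℓ × CPF ℓ) →₀ ℤ

def wordCPF {ℓ : ℕ} (a : CPF ℓ) : List (ℕ × Fin ℓ) :=
  (List.finRange a.1).map fun i => ((a.2.1.1 i : ℕ) + 1, a.2.1.2 i)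

def shiftW {ℓ : ℕ} (k : ℕ) (w : List (ℕ × Fin ℓ)) : List (ℕ × Fin ℓ) :=
  w.map fun p => (p.1 + k, p.2)

def shuffleList {α : Type} : List α → List α → List (List α)
  | [], v => [v]
  | a :: u, [] => [a :: u]
  | a :: u, b :: v =>
      ((shuffleList u (b :: v)).map (a :: ·)) ++ ((shuffleList (a :: u) v).map (b :: ·))
  termination_by u v => u.length + v.length

/-- The product on the `F` basis of `PQSym^(2)`: shifted shuffle of colored parking
functions (colors following their letters). -/
noncomputable def mulFB (a b : CPF 2) : PQS 2 :=
  ∑ c : CPFsub 2 (a.1 + b.1),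
    (if wordCPF (⟨a.1 + b.1, c⟩ : CPF 2) ∈
        shuffleList (wordCPF a) (shiftW a.1 (wordCPF b))
     then Finsupp.single (⟨a.1 + b.1, c⟩ : CPF 2) 1 else 0)

noncomputable def mulFx (x y : PQS 2) : PQS 2 :=
  x.sum fun a ca => y.sum fun b cb => (ca * cb) • mulFB a b

/-- The coproduct on the `G` basis of `PQSym^(2)` (shifted shuffle). -/
noncomputable def deltaPB {ℓ : ℕ} (a : CPF ℓ) : PQS2 ℓ :=
  ∑ k ∈ Finset.range (a.1 + 1),
    ∑ b' : CPFsub ℓ k, ∑ b'' : CPFsub ℓ (a.1 - k),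
      (if wordCPF a ∈ shuffleList (wordCPF (⟨k, b'⟩ : CPF ℓ))
            (shiftW k (wordCPF (⟨a.1 - k, b''⟩ : CPF ℓ)))
       then Finsupp.single ((⟨k, b'⟩ : CPF ℓ), (⟨a.1 - k, b''⟩ : CPF ℓ)) 1 else 0)

noncomputable def deltaP {ℓ : ℕ} (x : PQS ℓ) : PQS2 ℓ :=
  x.sum fun a c => c • deltaPB a

/-- `𝐚` has a match at `b`. -/
def IsMatch (l : List ℕ) (b : ℕ) : Prop :=
  l.countP (fun a => decide (a < b)) = b - 1 ∧ b ≤ l.countP (fun a => decide (a ≤ b))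

/-- Level-2 parking functions: only matches may carry color 1; for any letter of color 1
all equal letters to its left also carry color 1; every value has an occurrence of
color 0. -/
def IsL2 (a : CPF 2) : Prop :=
  (∀ i : Fin a.1, a.2.1.2 i = 1 → IsMatch (wordA a.2.1.1) ((a.2.1.1 i : ℕ) + 1))
  ∧ (∀ i j : Fin a.1, a.2.1.2 i = 1 → a.2.1.1 j = a.2.1.1 i → (j : ℕ) < (i : ℕ) →
      a.2.1.2 j = 1)
  ∧ (∀ i : Fin a.1, ∃ j : Fin a.1, a.2.1.1 j = a.2.1.1 i ∧ a.2.1.2 j = 0)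

/-
Being of level 2 is a condition on each value `val` separately, and it only involves the number
`c` of letters smaller than `val` and the word `cs` of colors of the letters equal to `val`: in
these terms `𝐚` has a match at `val ≥ 1` iff `c + 1 = val ≤ c + |cs|`. In a shuffle of `u` (a word
of length `k` on `[1, k]`) with `v` shifted by `k`, a value `val ≤ k` has the data of `u`, and
`val + k` has the data of `v` at `val` with `c` increased by `k`, which leaves the condition
unchanged. So a shifted shuffle is of level 2 iff both of its factors are. The product of two
`F`'s is a sum over shifted shuffles of the factors, and the coproduct of `G_a` a sum over the
pairs of which `a` is a shifted shuffle; both therefore stay in the level-2 spans.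
-/

theorem perm_append_and_sublists_of_mem_shuffleList {α : Type} :
    ∀ {u v w : List α}, w ∈ shuffleList u v → w.Perm (u ++ v) ∧ u.Sublist w ∧ v.Sublist w
  | [], v, w, h => by
    simp only [shuffleList, List.mem_singleton] at h
    subst h
    exact ⟨List.Perm.refl _, List.nil_sublist _, List.Sublist.refl _⟩
  | a :: u, [], w, h => by
    simp only [shuffleList, List.mem_singleton] at h
    subst h
    exact ⟨by simp, List.Sublist.refl _, List.nil_sublist _⟩
  | a :: u, b :: v, w, h => by
    rw [shuffleList] at h
    simp only [List.mem_append, List.mem_map] at h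
    rcases h with ⟨w', hw', rfl⟩ | ⟨w', hw', rfl⟩
    · obtain ⟨hperm, hu, hv⟩ := perm_append_and_sublists_of_mem_shuffleList hw'
      exact ⟨hperm.cons a, hu.cons_cons a, hv.cons a⟩
    · obtain ⟨hperm, hu, hv⟩ := perm_append_and_sublists_of_mem_shuffleList hw'
      exact ⟨(hperm.cons b).trans List.perm_middle.symm, hu.cons b, hv.cons_cons b⟩
  termination_by u v => u.length + v.length

theorem filter_eq_of_perm_append_of_sublist {α : Type} {u v w : List α} {p : α → Bool}
    (hperm : w.Perm (u ++ v)) (hsub : u.Sublist w) (hv : v.filter p = []) :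
    w.filter p = u.filter p := by
  refine ((hsub.filter p).eq_of_length ?_).symm
  simp only [← List.countP_eq_length_filter, hperm.countP_eq, List.countP_append,
    List.countP_eq_length_filter (l := v), hv, List.length_nil, add_zero]

def colorsAt {C : Type} (w : List (ℕ × C)) (val : ℕ) : List C :=
  (w.filter fun p => p.1 = val).map Prod.snd

theorem colorsAt_eq_nil {C : Type} {w : List (ℕ × C)} {val : ℕ} (h : ∀ p ∈ w, p.1 ≠ val) :
    colorsAt w val = [] := by
  simpa [colorsAt, List.filter_eq_nil_iff] using h

theorem mem_colorsAt {C : Type} {w : List (ℕ × C)} {val : ℕ} {x : C} :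
    x ∈ colorsAt w val ↔ (val, x) ∈ w := by
  simp [colorsAt]

theorem countP_shiftW {ℓ : ℕ} (k : ℕ) (v : List (ℕ × Fin ℓ)) (q : ℕ → Bool) :
    (shiftW k v).countP (fun p => q p.1) = v.countP (fun p => q (p.1 + k)) := by
  simp only [shiftW, List.countP_map]
  rfl

theorem colorsAt_shiftW {ℓ : ℕ} (k : ℕ) (v : List (ℕ × Fin ℓ)) (b : ℕ) :
    colorsAt (shiftW k v) (b + k) = colorsAt v b := by
  simp only [colorsAt, shiftW, List.filter_map, List.map_map]
  congr 1
  refine List.filter_congr fun p _ => ?_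
  simp

section ShiftedShuffle

variable {ℓ k : ℕ} {u v w : List (ℕ × Fin ℓ)}

theorem countP_lt_shuffle_left (hv : ∀ p ∈ v, 1 ≤ p.1) (hw : w ∈ shuffleList u (shiftW k v))
    {val : ℕ} (hval : val ≤ k) :
    w.countP (fun p => p.1 < val) = u.countP (fun p => p.1 < val) := by
  have hshifted : v.countP (fun p => p.1 + k < val) = 0 :=
    List.countP_eq_zero.2 fun p hp => by
      have := hv p hp
      simp only [decide_eq_true_eq]
      omega
  rw [(perm_append_and_sublists_of_mem_shuffleList hw).1.countP_eq, List.countP_append,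
    countP_shiftW k v (fun x => x < val), hshifted, add_zero]

theorem countP_lt_shuffle_right (hk : u.length = k) (hu : ∀ p ∈ u, p.1 ≤ k)
    (hw : w ∈ shuffleList u (shiftW k v)) {b : ℕ} (hb : 1 ≤ b) :
    w.countP (fun p => p.1 < b + k) = v.countP (fun p => p.1 < b) + k := by
  rw [(perm_append_and_sublists_of_mem_shuffleList hw).1.countP_eq, List.countP_append,
    countP_shiftW k v (fun x => x < b + k), List.countP_eq_length.2, hk, add_comm]
  · simp only [add_lt_add_iff_right]
  · intro p hp
    have := hu p hp
    simp only [decide_eq_true_eq]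
    omega

theorem colorsAt_shuffle_left (hv : ∀ p ∈ v, 1 ≤ p.1) (hw : w ∈ shuffleList u (shiftW k v))
    {val : ℕ} (hval : val ≤ k) : colorsAt w val = colorsAt u val := by
  obtain ⟨hperm, hsub, -⟩ := perm_append_and_sublists_of_mem_shuffleList hw
  rw [colorsAt, filter_eq_of_perm_append_of_sublist hperm hsub, colorsAt]
  rw [← List.map_eq_nil_iff (f := Prod.snd)]
  refine colorsAt_eq_nil fun p hp => ?_
  obtain ⟨r, hr, rfl⟩ := List.mem_map.1 hp
  have := hv r hr
  simp only
  omega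

theorem colorsAt_shuffle_right (hu : ∀ p ∈ u, p.1 ≤ k) (hw : w ∈ shuffleList u (shiftW k v))
    {b : ℕ} (hb : 1 ≤ b) : colorsAt w (b + k) = colorsAt v b := by
  obtain ⟨hperm, -, hsub⟩ := perm_append_and_sublists_of_mem_shuffleList hw
  rw [← colorsAt_shiftW k v b, colorsAt,
    filter_eq_of_perm_append_of_sublist (hperm.trans List.perm_append_comm) hsub, colorsAt]
  rw [← List.map_eq_nil_iff (f := Prod.snd)]
  refine colorsAt_eq_nil fun p hp => ?_
  have := hu p hp
  omega

end ShiftedShuffle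

def IsL2Block (val c : ℕ) (cs : List (Fin 2)) : Prop :=
  (1 ∈ cs → c + 1 = val ∧ val ≤ c + cs.length) ∧ cs.Pairwise (· ≥ ·) ∧ (cs ≠ [] → 0 ∈ cs)

theorem isL2Block_nil (val c : ℕ) : IsL2Block val c [] := by
  simp [IsL2Block]

theorem isL2Block_add_iff {val c : ℕ} (k : ℕ) {cs : List (Fin 2)} :
    IsL2Block (val + k) (c + k) cs ↔ IsL2Block val c cs := by
  unfold IsL2Block
  refine and_congr (imp_congr_right fun _ => ?_) Iff.rfl
  omega

def IsL2Word (w : List (ℕ × Fin 2)) : Prop :=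
  ∀ val, IsL2Block val (w.countP fun p => p.1 < val) (colorsAt w val)

theorem isL2Word_shuffle_iff {k : ℕ} {u v w : List (ℕ × Fin 2)} (hk : u.length = k)
    (hu : ∀ p ∈ u, p.1 ≤ k) (hv : ∀ p ∈ v, 1 ≤ p.1) (hw : w ∈ shuffleList u (shiftW k v)) :
    IsL2Word w ↔ IsL2Word u ∧ IsL2Word v := by
  constructor
  · intro hL2
    refine ⟨fun val => ?_, fun b => ?_⟩
    · by_cases hval : val ≤ k
      · rw [← countP_lt_shuffle_left hv hw hval, ← colorsAt_shuffle_left hv hw hval]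
        exact hL2 val
      · rw [colorsAt_eq_nil fun p hp => by have := hu p hp; omega]
        exact isL2Block_nil _ _
    · rcases Nat.eq_zero_or_pos b with rfl | hb
      · rw [colorsAt_eq_nil fun p hp => by have := hv p hp; omega]
        exact isL2Block_nil _ _
      · have := hL2 (b + k)
        rwa [countP_lt_shuffle_right hk hu hw hb, colorsAt_shuffle_right hu hw hb,
          isL2Block_add_iff] at this
  · rintro ⟨hLu, hLv⟩ val
    by_cases hval : val ≤ k
    · rw [countP_lt_shuffle_left hv hw hval, colorsAt_shuffle_left hv hw hval]
      exact hLu val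
    · obtain ⟨b, rfl⟩ : ∃ b, val = b + k := ⟨val - k, by omega⟩
      rw [countP_lt_shuffle_right hk hu hw (by omega), colorsAt_shuffle_right hu hw (by omega),
        isL2Block_add_iff]
      exact hLv b

theorem countP_fst_le_eq {C : Type} (w : List (ℕ × C)) (val : ℕ) :
    (w.countP fun p => p.1 ≤ val) = (w.countP fun p => p.1 < val) + (colorsAt w val).length := by
  induction w with
  | nil => rfl
  | cons p w ih =>
    simp only [List.countP_cons, colorsAt, List.filter_cons, decide_eq_true_eq] at ih ⊢
    split_ifs <;> simp only [List.map_cons, List.length_cons, ih] <;> omega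

theorem isMatch_map_fst_iff {C : Type} (w : List (ℕ × C)) {val : ℕ} (hval : 1 ≤ val) :
    IsMatch (w.map Prod.fst) val ↔ (w.countP fun p => p.1 < val) + 1 = val ∧
      val ≤ (w.countP fun p => p.1 < val) + (colorsAt w val).length := by
  simp only [IsMatch, List.countP_map, ← countP_fst_le_eq]
  refine and_congr ?_ Iff.rfl
  constructor <;> intro h <;> simp only [Function.comp_def] at h ⊢ <;> omega

theorem mem_colorsAt_wordCPF {ℓ : ℕ} (a : CPF ℓ) {val : ℕ} {x : Fin ℓ} :
    x ∈ colorsAt (wordCPF a) val ↔ ∃ i, (a.2.1.1 i : ℕ) + 1 = val ∧ a.2.1.2 i = x := by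
  simp [mem_colorsAt, wordCPF]

theorem pairwise_colorsAt_wordCPF {ℓ : ℕ} (a : CPF ℓ) (R : Fin ℓ → Fin ℓ → Prop) (val : ℕ) :
    (colorsAt (wordCPF a) val).Pairwise R ↔ ∀ i j : Fin a.1, i < j →
      (a.2.1.1 i : ℕ) + 1 = val → (a.2.1.1 j : ℕ) + 1 = val → R (a.2.1.2 i) (a.2.1.2 j) := by
  simp [colorsAt, wordCPF, List.pairwise_map, List.pairwise_filter,
    ← List.ofFn_id, List.pairwise_ofFn]

theorem wordA_eq_map_fst {ℓ : ℕ} (a : CPF ℓ) : wordA a.2.1.1 = (wordCPF a).map Prod.fst := by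
  simp [wordA, wordCPF]

theorem Fin.le_iff_eq_one_imp_eq_one {x y : Fin 2} : y ≤ x ↔ (y = 1 → x = 1) := by
  revert x y
  decide

theorem isL2_iff_isL2Word (a : CPF 2) : IsL2 a ↔ IsL2Word (wordCPF a) := by
  unfold IsL2Word IsL2Block
  rw [forall_and, forall_and]
  refine and_congr ?_ (and_congr ?_ ?_)
  · simp only [mem_colorsAt_wordCPF, wordA_eq_map_fst,
      isMatch_map_fst_iff _ (Nat.le_add_left 1 _)]
    constructor
    · rintro h val ⟨i, rfl, hi⟩
      exact h i hi
    · exact fun h i hi => h _ ⟨i, rfl, hi⟩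
  · simp only [pairwise_colorsAt_wordCPF, ge_iff_le, Fin.le_iff_eq_one_imp_eq_one]
    constructor
    · rintro h val i j hij rfl hj hgj
      exact h j i hgj (Fin.ext (by omega)) hij
    · intro h i j hgi hji hlt
      exact h _ j i hlt rfl (by rw [hji]) hgi
  · constructor
    · intro h val hne
      obtain ⟨x, hx⟩ := List.exists_mem_of_ne_nil _ hne
      obtain ⟨i, rfl, -⟩ := (mem_colorsAt_wordCPF a).1 hx
      obtain ⟨j, hj, hj0⟩ := h i
      exact (mem_colorsAt_wordCPF a).2 ⟨j, by rw [hj], hj0⟩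
    · intro h i
      have hne := List.ne_nil_of_mem ((mem_colorsAt_wordCPF a).2 ⟨i, rfl, rfl⟩)
      obtain ⟨j, hj, hj0⟩ := (mem_colorsAt_wordCPF a).1 (h _ hne)
      exact ⟨j, Fin.ext (by omega), hj0⟩

theorem length_wordCPF {ℓ : ℕ} (a : CPF ℓ) : (wordCPF a).length = a.1 := by
  simp [wordCPF]

theorem bounds_of_mem_wordCPF {ℓ : ℕ} {a : CPF ℓ} {p : ℕ × Fin ℓ} (hp : p ∈ wordCPF a) :
    1 ≤ p.1 ∧ p.1 ≤ a.1 := by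
  simp only [wordCPF, List.mem_map, List.mem_finRange, true_and] at hp
  obtain ⟨i, rfl⟩ := hp
  exact ⟨Nat.le_add_left 1 _, (a.2.1.1 i).isLt⟩

theorem isL2Word_shuffle_wordCPF_iff {a b : CPF 2} {w : List (ℕ × Fin 2)}
    (hw : w ∈ shuffleList (wordCPF a) (shiftW a.1 (wordCPF b))) :
    IsL2Word w ↔ IsL2 a ∧ IsL2 b := by
  rw [isL2_iff_isL2Word, isL2_iff_isL2Word]
  exact isL2Word_shuffle_iff (length_wordCPF a) (fun p hp => (bounds_of_mem_wordCPF hp).2)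
    (fun p hp => (bounds_of_mem_wordCPF hp).1) hw

theorem span_setOf_single_eq_supported {α R : Type*} [Semiring R] (P : α → Prop) :
    Submodule.span R {z : α →₀ R | ∃ a, P a ∧ z = Finsupp.single a 1} =
      Finsupp.supported R R {a | P a} := by
  rw [Finsupp.supported_eq_span_single]
  congr 1
  ext z
  simp [eq_comm]

theorem mulFB_mem_supported {a b : CPF 2} (ha : IsL2 a) (hb : IsL2 b) :
    mulFB a b ∈ Finsupp.supported ℤ ℤ {c | IsL2 c} := by
  refine Submodule.sum_mem _ fun c _ => ?_
  split_ifs with hc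
  · exact Finsupp.single_mem_supported ℤ 1
      ((isL2_iff_isL2Word _).2 ((isL2Word_shuffle_wordCPF_iff hc).2 ⟨ha, hb⟩))
  · exact zero_mem _

theorem deltaPB_mem_supported {a : CPF 2} (ha : IsL2 a) :
    deltaPB a ∈ Finsupp.supported ℤ ℤ {p | IsL2 p.1 ∧ IsL2 p.2} := by
  refine Submodule.sum_mem _ fun k _ => Submodule.sum_mem _ fun b' _ =>
    Submodule.sum_mem _ fun b'' _ => ?_
  split_ifs with ha'
  · exact Finsupp.single_mem_supported ℤ 1
      ((isL2Word_shuffle_wordCPF_iff ha').1 ((isL2_iff_isL2Word a).1 ha))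
  · exact zero_mem _

/-- STATEMENT 18: the span of the `F_{(𝐚,u)}` indexed by level-2 parking functions is a
subalgebra of `PQSym^(2)`, and the span of the `G_{(𝐚,u)}` indexed by level-2 parking
functions is a subcoalgebra of `PQSym^(2)`. -/
theorem stmt_18 :
    (∀ x y : PQS 2,
      x ∈ Submodule.span ℤ {z : PQS 2 | ∃ a : CPF 2, IsL2 a ∧ z = Finsupp.single a 1} →
      y ∈ Submodule.span ℤ {z : PQS 2 | ∃ a : CPF 2, IsL2 a ∧ z = Finsupp.single a 1} →
      mulFx x y ∈
        Submodule.span ℤ {z : PQS 2 | ∃ a : CPF 2, IsL2 a ∧ z = Finsupp.single a 1})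
    ∧ (∀ x : PQS 2,
      x ∈ Submodule.span ℤ {z : PQS 2 | ∃ a : CPF 2, IsL2 a ∧ z = Finsupp.single a 1} →
      deltaP x ∈ Submodule.span ℤ {z : PQS2 2 |
        ∃ a b : CPF 2, IsL2 a ∧ IsL2 b ∧ z = Finsupp.single (a, b) 1}) := by
  have hpairs : {z : PQS2 2 | ∃ a b : CPF 2, IsL2 a ∧ IsL2 b ∧ z = Finsupp.single (a, b) 1} =
      {z | ∃ p : CPF 2 × CPF 2, (IsL2 p.1 ∧ IsL2 p.2) ∧ z = Finsupp.single p 1} := by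
    simp only [Prod.exists, and_assoc]
  simp only [hpairs, span_setOf_single_eq_supported]
  refine ⟨fun x y hx hy => ?_, fun x hx => ?_⟩
  · rw [Finsupp.mem_supported] at hx hy
    exact Submodule.sum_mem _ fun a ha => Submodule.sum_mem _ fun b hb =>
      Submodule.smul_mem _ _ (mulFB_mem_supported (hx ha) (hy hb))
  · rw [Finsupp.mem_supported] at hx
    exact Submodule.sum_mem _ fun a ha => Submodule.smul_mem _ _ (deltaPB_mem_supported (hx ha))
end
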